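/- Let m ≥ 1 and n ≥ m+2 be integers and set W(n,m) = (−A⁶−A⁻⁶)·N(n−m) + (−A⁴−A⁻⁴+2)·P(n)·P̄(m) in ℤ[A, A⁻¹]. Then span(W(n,m)) > 16; in particular span(W(n,m)) ≠ 16. -/

import Mathlib

open LaurentPolynomial Finset

/-- The coefficient of `A^k` in the Laurent polynomial `y ∈ ℤ[A,A⁻¹]`. -/
noncomputable def coeffA (y : LaurentPolynomial ℤ) (k : ℤ) : ℤ := y.coeff k

/-- `y` has highest exponent `d`, with coefficient `c` (nonzero) on `A^d`. -/
def HiCoeff (y : LaurentPolynomial ℤ) (d c : ℤ) : Prop :=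
  coeffA y d = c ∧ c ≠ 0 ∧ ∀ k, d < k → coeffA y k = 0

/-- `y` has lowest exponent `d`, with coefficient `c` (nonzero) on `A^d`. -/
def LoCoeff (y : LaurentPolynomial ℤ) (d c : ℤ) : Prop :=
  coeffA y d = c ∧ c ≠ 0 ∧ ∀ k, k < d → coeffA y k = 0

/-- `y` has highest exponent `d`: `h(y) = d`. -/
def IsHi (y : LaurentPolynomial ℤ) (d : ℤ) : Prop :=
  coeffA y d ≠ 0 ∧ ∀ k, d < k → coeffA y k = 0

/-- `y` has lowest exponent `d`: `ℓ(y) = d`. -/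
def IsLo (y : LaurentPolynomial ℤ) (d : ℤ) : Prop :=
  coeffA y d ≠ 0 ∧ ∀ k, k < d → coeffA y k = 0

/-- P(n) = A^{−n−6} + (A⁴+A⁻⁴)·Σ_{k=1}^{n} (−1)^k A^{4k−n−2} -/
noncomputable def P (n : ℕ) : LaurentPolynomial ℤ :=
  T (-(n:ℤ) - 6) +
    (T 4 + T (-4)) * ∑ k ∈ Finset.Icc 1 n, (-1 : LaurentPolynomial ℤ)^k * T (4*(k:ℤ) - n - 2)

/-- P̄(n) = A^{n+6} + (A⁴+A⁻⁴)·Σ_{k=1}^{n} (−1)^k A^{−4k+n+2} -/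
noncomputable def Pbar (n : ℕ) : LaurentPolynomial ℤ :=
  T ((n:ℤ) + 6) +
    (T 4 + T (-4)) * ∑ k ∈ Finset.Icc 1 n, (-1 : LaurentPolynomial ℤ)^k * T (-4*(k:ℤ) + n + 2)

/-- Q(j) = −A^{2−j} + Σ_{k=0}^{j} (−1)^{k+1} A^{4k−j−2} -/
noncomputable def Q (j : ℕ) : LaurentPolynomial ℤ :=
  -T (2 - (j:ℤ)) + ∑ k ∈ Finset.range (j+1), (-1 : LaurentPolynomial ℤ)^(k+1) * T (4*(k:ℤ) - j - 2)

/-- N(j) = (−A⁶−A⁻⁶)·(−A³)^j + (−A⁴−A⁻⁴+2)·Q(j) -/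
noncomputable def N (j : ℕ) : LaurentPolynomial ℤ :=
  (-T 6 - T (-6)) * (-T 3)^j + (-T 4 - T (-4) + 2) * Q j

/-- R(m) = A^{−m−5} + (A⁴+A⁻⁴)·Σ_{k=1}^{m−1} (−1)^k A^{4k−m−1} -/
noncomputable def Rm (m : ℕ) : LaurentPolynomial ℤ :=
  T (-(m:ℤ) - 5) +
    (T 4 + T (-4)) * ∑ k ∈ Finset.Icc 1 (m-1), (-1 : LaurentPolynomial ℤ)^k * T (4*(k:ℤ) - m - 1)


/-!
The highest and lowest terms of `W(n, m)` both come from the second summand: it reaches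
`A^(3n+m+12)` and `A^(-n-3m-12)` with coefficients `±1`, while the first summand stays within
degrees `-(n-m)-12 .. 3(n-m)+12`. So `span W(n, m) = 4(n+m) + 24 > 16`. Extreme terms multiply
because `ℤ` has no zero divisors, and the substitution `A ↦ A⁻¹` (`invert`) turns every statement
about lowest terms into one about highest terms; it also maps `P(n)` to `P̄(n)`.
-/

def VanishesAbove (y : LaurentPolynomial ℤ) (d : ℤ) : Prop := ∀ k, d < k → coeffA y k = 0

def VanishesBelow (y : LaurentPolynomial ℤ) (d : ℤ) : Prop := ∀ k, k < d → coeffA y k = 0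

section HighestTerm

variable {y z : LaurentPolynomial ℤ} {d e c c' : ℤ}

lemma coeffA_add (y z : LaurentPolynomial ℤ) (k : ℤ) :
    coeffA (y + z) k = coeffA y k + coeffA z k := rfl

lemma coeffA_neg (y : LaurentPolynomial ℤ) (k : ℤ) : coeffA (-y) k = -coeffA y k := rfl

lemma VanishesAbove.mono (h : VanishesAbove y d) (hde : d ≤ e) : VanishesAbove y e :=
  fun k hk => h k (hde.trans_lt hk)

lemma VanishesAbove.le_of_mem_support (h : VanishesAbove y d) {k : ℤ}
    (hk : k ∈ y.coeff.support) : k ≤ d :=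
  not_lt.mp fun hdk => Finsupp.mem_support_iff.mp hk (h k hdk)

lemma VanishesAbove.sum {ι : Type*} {s : Finset ι} {f : ι → LaurentPolynomial ℤ}
    (h : ∀ i ∈ s, VanishesAbove (f i) d) : VanishesAbove (∑ i ∈ s, f i) d := fun k hk => by
  simp only [coeffA, AddMonoidAlgebra.coeff_sum, Finsupp.finsetSum_apply]
  exact sum_eq_zero fun i hi => h i hi k hk

lemma VanishesAbove.mul (hy : VanishesAbove y d) (hz : VanishesAbove z e) :
    VanishesAbove (y * z) (d + e) := by
  classical
  intro x hx
  simp only [coeffA, AddMonoidAlgebra.coeff_mul, Finsupp.sum]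
  refine sum_eq_zero fun a ha => sum_eq_zero fun b hb => if_neg ?_
  have := hy.le_of_mem_support ha
  have := hz.le_of_mem_support hb
  omega

lemma coeffA_mul_add_of_vanishesAbove (hy : VanishesAbove y d) (hz : VanishesAbove z e) :
    coeffA (y * z) (d + e) = coeffA y d * coeffA z e := by
  classical
  simp only [coeffA, AddMonoidAlgebra.coeff_mul, Finsupp.sum]
  rw [sum_eq_single d, sum_eq_single e, if_pos rfl]
  · exact fun b _ hbe => if_neg (by omega)
  · intro he
    rw [Finsupp.notMem_support_iff.mp he, mul_zero, ite_self]
  · refine fun a ha had => sum_eq_zero fun b hb => if_neg ?_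
    have := hy.le_of_mem_support ha
    have := hz.le_of_mem_support hb
    omega
  · intro hd
    simp [Finsupp.notMem_support_iff.mp hd]

lemma HiCoeff.vanishesAbove (h : HiCoeff y d c) : VanishesAbove y d := h.2.2

lemma HiCoeff.isHi (h : HiCoeff y d c) : IsHi y d := ⟨h.1 ▸ h.2.1, h.2.2⟩

lemma hiCoeff_T (a : ℤ) : HiCoeff (T a) a 1 :=
  ⟨by simp [coeffA], one_ne_zero, fun k hk => by simp [coeffA]; omega⟩

lemma HiCoeff.neg (h : HiCoeff y d c) : HiCoeff (-y) d (-c) :=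
  ⟨by rw [coeffA_neg, h.1], neg_ne_zero.mpr h.2.1,
    fun k hk => by rw [coeffA_neg, h.2.2 k hk, neg_zero]⟩

lemma HiCoeff.mul (hy : HiCoeff y d c) (hz : HiCoeff z e c') :
    HiCoeff (y * z) (d + e) (c * c') :=
  ⟨by rw [coeffA_mul_add_of_vanishesAbove hy.2.2 hz.2.2, hy.1, hz.1], mul_ne_zero hy.2.1 hz.2.1,
    hy.vanishesAbove.mul hz.vanishesAbove⟩

lemma HiCoeff.pow (h : HiCoeff y d c) (n : ℕ) : HiCoeff (y ^ n) (n * d) (c ^ n) := by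
  induction n with
  | zero => simpa using hiCoeff_T 0
  | succ n ih => simpa [pow_succ, add_mul] using ih.mul h

lemma HiCoeff.add_of_lt (hy : HiCoeff y d c) (hz : VanishesAbove z e) (hed : e < d) :
    HiCoeff (y + z) d c :=
  ⟨by rw [coeffA_add, hy.1, hz d hed, add_zero], hy.2.1,
    fun k hk => by rw [coeffA_add, hy.2.2 k hk, hz k (hed.trans hk), add_zero]⟩

lemma HiCoeff.add_of_lt' (hz : HiCoeff z d c) (hy : VanishesAbove y e) (hed : e < d) :
    HiCoeff (y + z) d c :=
  add_comm z y ▸ hz.add_of_lt hy hed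

lemma HiCoeff.sum_of_lt {ι : Type*} [DecidableEq ι] {s : Finset ι}
    {f : ι → LaurentPolynomial ℤ} {i : ι} (hi : i ∈ s) (hf : HiCoeff (f i) d c)
    (hs : ∀ k ∈ s, k ≠ i → VanishesAbove (f k) e) (hed : e < d) :
    HiCoeff (∑ k ∈ s, f k) d c := by
  rw [← add_sum_erase s f hi]
  exact hf.add_of_lt
    (VanishesAbove.sum fun k hk => hs k (mem_of_mem_erase hk) (ne_of_mem_erase hk)) hed

lemma hiCoeff_neg_one_pow_mul_T (k : ℕ) (a : ℤ) :
    HiCoeff ((-1 : LaurentPolynomial ℤ) ^ k * T a) a ((-1) ^ k) := by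
  simpa [T_zero] using ((hiCoeff_T 0).neg.pow k).mul (hiCoeff_T a)

end HighestTerm

section LowestTerm

variable {y z : LaurentPolynomial ℤ} {d e c c' : ℤ}

lemma VanishesBelow.mono (h : VanishesBelow y d) (hed : e ≤ d) : VanishesBelow y e :=
  fun k hk => h k (hk.trans_le hed)

lemma LoCoeff.vanishesBelow (h : LoCoeff y d c) : VanishesBelow y d := h.2.2

lemma LoCoeff.isLo (h : LoCoeff y d c) : IsLo y d := ⟨h.1 ▸ h.2.1, h.2.2⟩

lemma vanishesBelow_iff_vanishesAbove_invert :
    VanishesBelow y d ↔ VanishesAbove (invert y) (-d) := by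
  simp only [VanishesBelow, VanishesAbove, coeffA, invert_apply]
  exact ⟨fun h k hk => h (-k) (by omega), fun h k hk => by simpa using h (-k) (by omega)⟩

lemma loCoeff_iff_hiCoeff_invert : LoCoeff y d c ↔ HiCoeff (invert y) (-d) c := by
  change LoCoeff y d c ↔ coeffA (invert y) (-d) = c ∧ c ≠ 0 ∧ VanishesAbove (invert y) (-d)
  rw [← vanishesBelow_iff_vanishesAbove_invert, coeffA, invert_apply, neg_neg]
  rfl

lemma loCoeff_T (a : ℤ) : LoCoeff (T a) a 1 := by
  simpa [loCoeff_iff_hiCoeff_invert] using hiCoeff_T (-a)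

lemma LoCoeff.neg (h : LoCoeff y d c) : LoCoeff (-y) d (-c) := by
  rw [loCoeff_iff_hiCoeff_invert] at *
  rw [map_neg]
  exact h.neg

lemma LoCoeff.mul (hy : LoCoeff y d c) (hz : LoCoeff z e c') :
    LoCoeff (y * z) (d + e) (c * c') := by
  rw [loCoeff_iff_hiCoeff_invert] at *
  rw [map_mul, neg_add]
  exact hy.mul hz

lemma LoCoeff.pow (h : LoCoeff y d c) (n : ℕ) : LoCoeff (y ^ n) (n * d) (c ^ n) := by
  rw [loCoeff_iff_hiCoeff_invert] at *
  rw [map_pow, ← mul_neg]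
  exact h.pow n

lemma LoCoeff.add_of_lt (hy : LoCoeff y d c) (hz : VanishesBelow z e) (hde : d < e) :
    LoCoeff (y + z) d c := by
  rw [loCoeff_iff_hiCoeff_invert, vanishesBelow_iff_vanishesAbove_invert] at *
  rw [map_add]
  exact hy.add_of_lt hz (neg_lt_neg hde)

lemma LoCoeff.add_of_lt' (hz : LoCoeff z d c) (hy : VanishesBelow y e) (hde : d < e) :
    LoCoeff (y + z) d c :=
  add_comm z y ▸ hz.add_of_lt hy hde

lemma LoCoeff.sum_of_lt {ι : Type*} [DecidableEq ι] {s : Finset ι}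
    {f : ι → LaurentPolynomial ℤ} {i : ι} (hi : i ∈ s) (hf : LoCoeff (f i) d c)
    (hs : ∀ k ∈ s, k ≠ i → VanishesBelow (f k) e) (hde : d < e) :
    LoCoeff (∑ k ∈ s, f k) d c := by
  simp only [loCoeff_iff_hiCoeff_invert, vanishesBelow_iff_vanishesAbove_invert] at *
  rw [map_sum]
  exact hf.sum_of_lt hi hs (neg_lt_neg hde)

lemma loCoeff_neg_one_pow_mul_T (k : ℕ) (a : ℤ) :
    LoCoeff ((-1 : LaurentPolynomial ℤ) ^ k * T a) a ((-1) ^ k) := by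
  simpa [loCoeff_iff_hiCoeff_invert] using hiCoeff_neg_one_pow_mul_T k (-a)

end LowestTerm

section Symmetric

variable {a : ℤ}

lemma hiCoeff_T_add_T_neg (ha : 0 < a) : HiCoeff (T a + T (-a)) a 1 :=
  (hiCoeff_T a).add_of_lt (hiCoeff_T (-a)).vanishesAbove (by omega)

lemma loCoeff_T_add_T_neg (ha : 0 < a) : LoCoeff (T a + T (-a)) (-a) 1 :=
  (loCoeff_T (-a)).add_of_lt' (loCoeff_T a).vanishesBelow (by omega)

lemma hiCoeff_neg_T_sub_T_neg (ha : 0 < a) :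
    HiCoeff (-T a - T (-a) : LaurentPolynomial ℤ) a (-1) :=
  neg_add' (T a : LaurentPolynomial ℤ) (T (-a)) ▸ (hiCoeff_T_add_T_neg ha).neg

lemma loCoeff_neg_T_sub_T_neg (ha : 0 < a) :
    LoCoeff (-T a - T (-a) : LaurentPolynomial ℤ) (-a) (-1) :=
  neg_add' (T a : LaurentPolynomial ℤ) (T (-a)) ▸ (loCoeff_T_add_T_neg ha).neg

lemma hiCoeff_neg_T_sub_T_neg_add_two (ha : 0 < a) :
    HiCoeff (-T a - T (-a) + 2) a (-1) :=
  ⟨by simp [coeffA, Finsupp.single_apply]; omega, by norm_num,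
    fun k hk => by simp [coeffA, Finsupp.single_apply]; omega⟩

lemma loCoeff_neg_T_sub_T_neg_add_two (ha : 0 < a) :
    LoCoeff (-T a - T (-a) + 2) (-a) (-1) :=
  ⟨by simp [coeffA, Finsupp.single_apply]; omega, by norm_num,
    fun k hk => by simp [coeffA, Finsupp.single_apply]; omega⟩

end Symmetric

lemma hiCoeff_P {n : ℕ} (hn : 1 ≤ n) : HiCoeff (P n) (3 * n + 2) ((-1) ^ n) := by
  have hsum := (hiCoeff_neg_one_pow_mul_T n _).sum_of_lt (mem_Icc.mpr ⟨hn, le_rfl⟩)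
    (fun k hk hkn => (hiCoeff_neg_one_pow_mul_T k _).vanishesAbove.mono
      (by grind : 4 * (k : ℤ) - n - 2 ≤ 4 * n - n - 3)) (by omega)
  have := ((hiCoeff_T_add_T_neg four_pos).mul hsum).add_of_lt'
    (hiCoeff_T (-(n : ℤ) - 6)).vanishesAbove (by omega)
  unfold P
  convert this using 1 <;> ring

lemma loCoeff_P {n : ℕ} (hn : 1 ≤ n) : LoCoeff (P n) (-n - 6) 1 := by
  have hsum := (loCoeff_neg_one_pow_mul_T 1 _).sum_of_lt (mem_Icc.mpr ⟨le_rfl, hn⟩)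
    (fun k hk hk1 => (loCoeff_neg_one_pow_mul_T k _).vanishesBelow.mono
      (by grind : 4 * 1 - n - 1 ≤ 4 * (k : ℤ) - n - 2)) (by omega)
  exact (loCoeff_T _).add_of_lt
    ((loCoeff_T_add_T_neg four_pos).mul hsum).vanishesBelow (by omega)

lemma invert_P (n : ℕ) : invert (P n) = Pbar n := by
  simp only [P, Pbar, map_add, map_mul, map_sum, map_pow, map_neg, map_one, invert_T, neg_neg]
  rw [add_comm (T (-4)), show -(-(n : ℤ) - 6) = n + 6 by ring]
  refine congrArg (T _ + (T 4 + T (-4)) * ·) (sum_congr rfl fun k _ => ?_)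
  rw [show -(4 * (k : ℤ) - n - 2) = -4 * k + n + 2 by ring]

lemma hiCoeff_Pbar {m : ℕ} (hm : 1 ≤ m) : HiCoeff (Pbar m) (m + 6) 1 := by
  have := loCoeff_iff_hiCoeff_invert.mp (loCoeff_P hm)
  rw [invert_P] at this
  convert this using 1
  ring

lemma loCoeff_Pbar {m : ℕ} (hm : 1 ≤ m) : LoCoeff (Pbar m) (-3 * m - 2) ((-1) ^ m) := by
  rw [loCoeff_iff_hiCoeff_invert, ← invert_P, involutive_invert]
  convert hiCoeff_P hm using 1
  ring

lemma hiCoeff_Q {j : ℕ} (hj : 2 ≤ j) : HiCoeff (Q j) (3 * j - 2) ((-1) ^ (j + 1)) := by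
  have hsum := (hiCoeff_neg_one_pow_mul_T (j + 1) _).sum_of_lt (mem_range.mpr j.lt_succ_self)
    (fun k hk hkj => (hiCoeff_neg_one_pow_mul_T (k + 1) _).vanishesAbove.mono
      (by grind : 4 * (k : ℤ) - j - 2 ≤ 4 * j - j - 3)) (by omega)
  have := hsum.add_of_lt' (hiCoeff_T (2 - (j : ℤ))).neg.vanishesAbove (by omega)
  unfold Q
  convert this using 1
  ring

lemma loCoeff_Q (j : ℕ) : LoCoeff (Q j) (-j - 2) (-1) := by
  have hsum := (loCoeff_neg_one_pow_mul_T (0 + 1) _).sum_of_lt (mem_range.mpr j.succ_pos)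
    (fun k hk hk0 => (loCoeff_neg_one_pow_mul_T (k + 1) _).vanishesBelow.mono
      (by grind : 4 * 0 - j - 1 ≤ 4 * (k : ℤ) - j - 2)) (by omega)
  have := hsum.add_of_lt' (loCoeff_T (2 - (j : ℤ))).neg.vanishesBelow (by omega)
  unfold Q
  convert this using 1 <;> ring

lemma hiCoeff_N {j : ℕ} (hj : 2 ≤ j) : HiCoeff (N j) (3 * j + 6) (-(-1) ^ j) := by
  have := ((hiCoeff_neg_T_sub_T_neg (by norm_num : (0 : ℤ) < 6)).mul
      ((hiCoeff_T 3).neg.pow j)).add_of_lt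
    ((hiCoeff_neg_T_sub_T_neg_add_two four_pos).mul (hiCoeff_Q hj)).vanishesAbove (by omega)
  unfold N
  convert this using 1 <;> ring

lemma loCoeff_N {j : ℕ} (hj : 1 ≤ j) : LoCoeff (N j) (-j - 6) 1 := by
  have := ((loCoeff_neg_T_sub_T_neg_add_two four_pos).mul (loCoeff_Q j)).add_of_lt'
    ((loCoeff_neg_T_sub_T_neg (by norm_num : (0 : ℤ) < 6)).mul
      ((loCoeff_T 3).neg.pow j)).vanishesBelow (by omega)
  unfold N
  convert this using 1 <;> ring

/-- for m ≥ 1 and n ≥ m+2,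
W(n,m) = (−A⁶−A⁻⁶)·N(n−m) + (−A⁴−A⁻⁴+2)·P(n)·P̄(m) has span > 16, in particular span ≠ 16. -/
theorem stmt_6 (n m : ℕ) (hm : 1 ≤ m) (hn : m + 2 ≤ n)
    (W : LaurentPolynomial ℤ)
    (hW : W = (-T 6 - T (-6)) * N (n - m) + (-T 4 - T (-4) + 2) * (P n * Pbar m)) :
    ∃ dh dl : ℤ, IsHi W dh ∧ IsLo W dl ∧ dh - dl > 16 ∧ dh - dl ≠ 16 := by
  subst hW
  have hj : 2 ≤ n - m := by omega
  have h6 : (0 : ℤ) < 6 := by norm_num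
  have hhi := ((hiCoeff_neg_T_sub_T_neg_add_two four_pos).mul
      ((hiCoeff_P (n := n) (by omega)).mul (hiCoeff_Pbar hm))).add_of_lt'
    ((hiCoeff_neg_T_sub_T_neg h6).mul (hiCoeff_N hj)).vanishesAbove (by omega)
  have hlo := ((loCoeff_neg_T_sub_T_neg_add_two four_pos).mul
      ((loCoeff_P (n := n) (by omega)).mul (loCoeff_Pbar hm))).add_of_lt'
    ((loCoeff_neg_T_sub_T_neg h6).mul (loCoeff_N (j := n - m) (by omega))).vanishesBelow
      (by omega)
  exact ⟨_, _, hhi.isHi, hlo.isLo, by omega, by omega⟩
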